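/- arXiv:2111.09186 — 3 statements merged into one kernel-verified Lean document; each statement's English description precedes it below -/
import Mathlib

section
/- Fix m ≥ 1, α ∈ (0,1), and let P(ξ) = ξ₁^m, γ(x,t) = x + (t^α/1000, 0, ..., 0). For R ≥ 1 define f_R by f̂_R = χ_{Q_R} where Q_R = {ξ ∈ ℝⁿ : R ≤ ξ_i ≤ R+1, 1 ≤ i ≤ n}. If 1/m ≤ α < 1, set t₀ = R^{-m}/100. Then for every R large enough that (R+1)^m/R^m ≤ 2 and every x ∈ B(0, 1/1000), one has |∫_{Q_R} e^{i x·ξ}(i t₀^α ξ₁/1000 + i t₀ ξ₁^m) dξ| ≥ 1/200. -/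
/-!
The amplitude depends on `ξ 0` only, so the integrand is a product of functions of one variable
and the integral over the cube factorises (Fubini). In the `i`-th factor, after pulling out the
phase at the left endpoint `R`, the real part of the integrand is `cos (x i * (t - R))` times the
amplitude, hence the factor has modulus at least `b i * (1 - x i ^ 2 / 2)`, with `b 0 = 1/100` a
lower bound of the amplitude `t₀^α t/1000 + t₀ t^m` on `[R, R+1]` and `b i = 1` otherwise.
The Weierstrass inequality `∏ (1 - aᵢ) ≥ 1 - ∑ aᵢ` turns the product into
`(1 - ‖x‖² / 2) / 100 ≥ 1/200`. Factorising avoids the estimate `|x·η| ≤ √n ‖x‖`, which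
degrades with the dimension.
-/

open MeasureTheory Set

theorem one_sub_sum_le_prod_one_sub {ι : Type*} (s : Finset ι) {f : ι → ℝ}
    (h0 : ∀ i ∈ s, 0 ≤ f i) (h1 : ∀ i ∈ s, f i ≤ 1) :
    1 - ∑ i ∈ s, f i ≤ ∏ i ∈ s, (1 - f i) := by
  induction s using Finset.cons_induction with
  | empty => simp
  | cons a s _ ih =>
    simp only [Finset.mem_cons, forall_eq_or_imp] at h0 h1
    rw [Finset.sum_cons, Finset.prod_cons]
    have hs : 0 ≤ ∑ i ∈ s, f i := Finset.sum_nonneg h0.2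
    calc 1 - (f a + ∑ i ∈ s, f i) ≤ (1 - f a) * (1 - ∑ i ∈ s, f i) := by nlinarith
      _ ≤ (1 - f a) * ∏ i ∈ s, (1 - f i) :=
        mul_le_mul_of_nonneg_left (ih h0.2 h1.2) (sub_nonneg.2 h1.1)

theorem EuclideanSpace.sq_apply_le_norm_sq {ι : Type*} [Fintype ι] (x : EuclideanSpace ℝ ι)
    (i : ι) : x i ^ 2 ≤ ‖x‖ ^ 2 := by
  simpa using pow_le_pow_left₀ (norm_nonneg _) (PiLp.norm_apply_le x i) 2

theorem EuclideanSpace.one_sub_norm_sq_div_two_le_prod {ι : Type*} [Fintype ι]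
    (x : EuclideanSpace ℝ ι) (hx : ‖x‖ ^ 2 ≤ 2) :
    1 - ‖x‖ ^ 2 / 2 ≤ ∏ i, (1 - x i ^ 2 / 2) := by
  have hcoord := EuclideanSpace.sq_apply_le_norm_sq x
  rw [EuclideanSpace.real_norm_sq_eq, Finset.sum_div]
  exact one_sub_sum_le_prod_one_sub _ (fun i _ => by positivity)
    (fun i _ => by linarith [hcoord i])

theorem mul_measureReal_le_norm_setIntegral {X : Type*} [MeasurableSpace X] {μ : Measure X}
    {s : Set X} {f : X → ℂ} {b : ℝ} (hs : MeasurableSet s) (hμs : μ s ≠ ⊤)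
    (hf : IntegrableOn f s μ) (hb : ∀ x ∈ s, b ≤ (f x).re) :
    b * μ.real s ≤ ‖∫ x in s, f x ∂μ‖ :=
  calc b * μ.real s ≤ ∫ x in s, (f x).re ∂μ := setIntegral_ge_of_const_le_real hs hμs hb hf.re
    _ = (∫ x in s, f x ∂μ).re := integral_re hf
    _ ≤ ‖∫ x in s, f x ∂μ‖ := Complex.re_le_norm _

theorem mul_one_sub_sq_div_two_le_norm_setIntegral_Icc {a c b : ℝ} {φ : ℝ → ℝ}
    (hc : c ^ 2 ≤ 2) (hb : 0 ≤ b) (hφ : ∀ t ∈ Icc a (a + 1), b ≤ φ t)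
    (hint : IntegrableOn φ (Icc a (a + 1))) :
    b * (1 - c ^ 2 / 2) ≤
      ‖∫ t in Icc a (a + 1), Complex.exp (Complex.I * (c * t)) * φ t‖ := by
  -- Factoring out the phase at the left endpoint keeps the remaining phase in `[-|c|, |c|]`.
  have hshift : ∫ t in Icc a (a + 1), Complex.exp (Complex.I * (c * t)) * φ t =
      Complex.exp ((c * a : ℝ) * Complex.I) *
        ∫ t in Icc a (a + 1), Complex.exp ((c * (t - a) : ℝ) * Complex.I) * φ t := by
    rw [← integral_const_mul]
    refine integral_congr_ae (ae_of_all _ fun t => ?_)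
    dsimp only
    rw [← mul_assoc (Complex.exp _), ← Complex.exp_add]
    push_cast
    ring_nf
  rw [hshift, norm_mul, Complex.norm_exp_ofReal_mul_I, one_mul]
  have hre (t : ℝ) (ht : t ∈ Icc a (a + 1)) :
      b * (1 - c ^ 2 / 2) ≤ (Complex.exp ((c * (t - a) : ℝ) * Complex.I) * φ t).re := by
    rw [Complex.re_mul_ofReal, Complex.exp_ofReal_mul_I_re]
    have hcos : 1 - c ^ 2 / 2 ≤ Real.cos (c * (t - a)) := by
      have : (c * (t - a)) ^ 2 ≤ c ^ 2 := by
        rw [mul_pow]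
        exact mul_le_of_le_one_right (sq_nonneg c) (by nlinarith [ht.1, ht.2])
      linarith [Real.one_sub_sq_div_two_le_cos (x := c * (t - a))]
    have := hφ t ht
    nlinarith
  have hint' : IntegrableOn (fun t : ℝ => Complex.exp ((c * (t - a) : ℝ) * Complex.I) * φ t)
      (Icc a (a + 1)) :=
    IntegrableOn.continuousOn_mul (by fun_prop) hint.ofReal isCompact_Icc
  simpa [Real.volume_real_Icc] using
    mul_measureReal_le_norm_setIntegral measurableSet_Icc measure_Icc_lt_top.ne hint' hre

theorem setIntegral_univ_pi_prod_eq_prod {ι 𝕜 : Type*} [Fintype ι] [RCLike 𝕜] {E : ι → Type*}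
    [∀ i, MeasurableSpace (E i)] (μ : ∀ i, Measure (E i)) [∀ i, SigmaFinite (μ i)]
    (s : ∀ i, Set (E i)) (f : ∀ i, E i → 𝕜) :
    ∫ x in univ.pi s, ∏ i, f i (x i) ∂Measure.pi μ = ∏ i, ∫ t in s i, f i t ∂μ i := by
  rw [Measure.restrict_pi_pi, integral_fintype_prod_eq_prod]

theorem EuclideanSpace.setIntegral_prod_eq_prod {ι 𝕜 : Type*} [Fintype ι] [RCLike 𝕜]
    (s : ι → Set ℝ) (f : ι → ℝ → 𝕜) :
    ∫ ξ in {ξ : EuclideanSpace ℝ ι | ∀ i, ξ i ∈ s i}, ∏ i, f i (ξ i) =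
      ∏ i, ∫ t in s i, f i t := by
  rw [← setIntegral_univ_pi_prod_eq_prod]
  have hcube : {ξ : EuclideanSpace ℝ ι | ∀ i, ξ i ∈ s i} =
      (MeasurableEquiv.toLp 2 (ι → ℝ)).symm ⁻¹' univ.pi s := by
    ext ξ
    simp
  rw [hcube]
  exact (EuclideanSpace.volume_preserving_symm_measurableEquiv_toLp ι).setIntegral_preimage_emb
    (MeasurableEquiv.measurableEmbedding _) (fun x => ∏ i, f i (x i)) (univ.pi s)

theorem exp_inner_mul_eq_prod {ι : Type*} [Fintype ι] [DecidableEq ι]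
    (x ξ : EuclideanSpace ℝ ι) (k : ι) (A : ℝ → ℝ) :
    Complex.exp (Complex.I * (inner ℝ x ξ : ℝ)) * (A (ξ k) : ℂ) =
      ∏ i, Complex.exp (Complex.I * (x i * ξ i)) * ((if i = k then A (ξ i) else 1 : ℝ) : ℂ) := by
  rw [Finset.prod_mul_distrib, ← Complex.exp_sum, PiLp.inner_apply, ← Complex.ofReal_prod,
    Finset.prod_ite_eq']
  simp [Finset.mul_sum, mul_comm]

theorem one_div_hundred_le_amplitude {m α R t : ℝ} (hm : 0 ≤ m) (hR : 0 < R) (ht : R ≤ t) :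
    1 / 100 ≤ (R ^ (-m) / 100) ^ α * t / 1000 + R ^ (-m) / 100 * t ^ m := by
  have hlinear : 0 ≤ (R ^ (-m) / 100) ^ α * t / 1000 := by
    have : 0 ≤ (R ^ (-m) / 100) ^ α := by positivity
    have : 0 ≤ t := hR.le.trans ht
    positivity
  have hpower : 1 / 100 ≤ R ^ (-m) / 100 * t ^ m :=
    calc 1 / 100 = R ^ (-m) / 100 * R ^ m := by
          rw [div_mul_eq_mul_div, ← Real.rpow_add hR, neg_add_cancel, Real.rpow_zero]
      _ ≤ R ^ (-m) / 100 * t ^ m := by gcongr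
  linarith

theorem mul_one_sub_norm_sq_div_two_le_norm_setIntegral_cube {ι : Type*} [Fintype ι]
    [DecidableEq ι] {x : EuclideanSpace ℝ ι} (hx : ‖x‖ ^ 2 ≤ 2) {a b : ℝ} (hb : 0 ≤ b) (k : ι)
    {A : ℝ → ℝ} (hA : ∀ t ∈ Icc a (a + 1), b ≤ A t) (hAint : IntegrableOn A (Icc a (a + 1))) :
    b * (1 - ‖x‖ ^ 2 / 2) ≤
      ‖∫ ξ in {ξ : EuclideanSpace ℝ ι | ∀ i, ξ i ∈ Icc a (a + 1)},
        Complex.exp (Complex.I * (inner ℝ x ξ : ℝ)) * A (ξ k)‖ := by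
  set φ : ι → ℝ → ℝ := fun i t => if i = k then A t else 1
  set β : ι → ℝ := fun i => if i = k then b else 1
  have hβ (i : ι) : 0 ≤ β i := by simp only [β]; split_ifs <;> linarith
  have hφ (i : ι) : ∀ t ∈ Icc a (a + 1), β i ≤ φ i t := fun t ht => by
    simp only [β, φ]; split_ifs; exacts [hA t ht, le_rfl]
  have hφint (i : ι) : IntegrableOn (φ i) (Icc a (a + 1)) := by
    simp only [φ]; split_ifs; exacts [hAint, integrableOn_const measure_Icc_lt_top.ne]
  have hxi (i : ι) : x i ^ 2 ≤ 2 := (EuclideanSpace.sq_apply_le_norm_sq x i).trans hx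
  calc b * (1 - ‖x‖ ^ 2 / 2) ≤ b * ∏ i, (1 - x i ^ 2 / 2) :=
        mul_le_mul_of_nonneg_left (EuclideanSpace.one_sub_norm_sq_div_two_le_prod x hx) hb
    _ = ∏ i, β i * (1 - x i ^ 2 / 2) := by rw [Finset.prod_mul_distrib]; simp [β]
    _ ≤ ∏ i, ‖∫ t in Icc a (a + 1), Complex.exp (Complex.I * (x i * t)) * φ i t‖ :=
      Finset.prod_le_prod (fun i _ => mul_nonneg (hβ i) (by linarith [hxi i])) fun i _ =>
        mul_one_sub_sq_div_two_le_norm_setIntegral_Icc (hxi i) (hβ i) (hφ i) (hφint i)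
    _ = _ := by
      rw [← norm_prod, ← EuclideanSpace.setIntegral_prod_eq_prod]
      simp only [φ, exp_inner_mul_eq_prod x _ k A]

theorem stmt_4_general (n : ℕ) (m α R : ℝ) (hm : 1 ≤ m) (hR : 1 ≤ R)
    (x : EuclideanSpace ℝ (Fin (n+1))) (hx : x ∈ Metric.ball (0 : EuclideanSpace ℝ (Fin (n+1))) (1/1000)) :
    (1:ℝ)/200 ≤
      ‖∫ ξ in {ξ : EuclideanSpace ℝ (Fin (n+1)) | ∀ i, R ≤ ξ i ∧ ξ i ≤ R + 1},
          Complex.exp (Complex.I * ((inner ℝ x ξ : ℝ) : ℂ)) *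
            (Complex.I * (((R ^ (-m) / 100) ^ α * ξ 0 / 1000 +
              (R ^ (-m) / 100) * (ξ 0) ^ m : ℝ) : ℂ))‖ := by
  set A : ℝ → ℝ := fun t => (R ^ (-m) / 100) ^ α * t / 1000 + R ^ (-m) / 100 * t ^ m
  have hA : ∀ t ∈ Icc R (R + 1), 1 / 100 ≤ A t := fun t ht =>
    one_div_hundred_le_amplitude (by linarith) (by linarith) ht.1
  have hAint : IntegrableOn A (Icc R (R + 1)) := by
    have : Continuous fun t : ℝ => t ^ m := Real.continuous_rpow_const (by linarith)
    exact (by fun_prop : Continuous A).integrableOn_Icc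
  have hx2 : ‖x‖ ^ 2 ≤ (1 / 1000) ^ 2 := by
    have := mem_ball_zero_iff.1 hx
    gcongr
  calc (1 : ℝ) / 200 ≤ 1 / 100 * (1 - ‖x‖ ^ 2 / 2) := by nlinarith
    _ ≤ ‖∫ ξ in {ξ : EuclideanSpace ℝ (Fin (n + 1)) | ∀ i, ξ i ∈ Icc R (R + 1)},
          Complex.exp (Complex.I * (inner ℝ x ξ : ℝ)) * A (ξ 0)‖ :=
      mul_one_sub_norm_sq_div_two_le_norm_setIntegral_cube (by nlinarith) (by norm_num) 0 hA hAint
    _ = ‖Complex.I * ∫ ξ in {ξ : EuclideanSpace ℝ (Fin (n + 1)) | ∀ i, ξ i ∈ Icc R (R + 1)},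
          Complex.exp (Complex.I * (inner ℝ x ξ : ℝ)) * A (ξ 0)‖ := by
      rw [norm_mul, Complex.norm_I, one_mul]
    _ = _ := by
      rw [← integral_const_mul]
      exact congrArg norm (integral_congr_ae (ae_of_all _ fun ξ => mul_left_comm _ _ _))

theorem stmt_4 (n : ℕ) (m α R : ℝ) (hm : 1 ≤ m) (hα : 1/m ≤ α) (hα1 : α < 1)
    (hR : 1 ≤ R) (hRm : (R+1) ^ m / R ^ m ≤ 2)
    (x : EuclideanSpace ℝ (Fin (n+1))) (hx : x ∈ Metric.ball (0 : EuclideanSpace ℝ (Fin (n+1))) (1/1000)) :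
    (1:ℝ)/200 ≤
      ‖∫ ξ in {ξ : EuclideanSpace ℝ (Fin (n+1)) | ∀ i, R ≤ ξ i ∧ ξ i ≤ R + 1},
          Complex.exp (Complex.I * ((inner ℝ x ξ : ℝ) : ℂ)) *
            (Complex.I * (((R ^ (-m) / 100) ^ α * ξ 0 / 1000 +
              (R ^ (-m) / 100) * (ξ 0) ^ m : ℝ) : ℂ))‖ :=
  stmt_4_general n m α R hm hR x hx
end

section
/- (Schur-type estimate) Let 0 < α ≤ 1/4, λ ≥ 2, and let g ∈ L²(ℝ) be supported in a ball B(x₀, r). Then ∫∫_{{(x,y): c λ^{-2α} ≤ |x-y| < λ^{-α/(1-α)}}} |g(x)||g(y)| |x-y|^{-1/(2α)} dx dy ≤ C λ^{1-2α} ‖g‖²_{L²}, where C depends only on c and α. -/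
/-!
Drop the upper cutoff. With `P = 1/(2α) > 1`, the kernel `|x - y|^(-P)` restricted to
`|x - y| ≥ a` is symmetric and each of its slices has integral `2 a^(1-P)/(P-1)`. Schur's test
(via `2uv ≤ u² + v²` and the symmetry of the kernel) bounds the bilinear form by this constant
times `‖g‖₂²`, and for `a = c λ^(-2α)` the constant is `C λ^(1-2α)`.
-/

open MeasureTheory Set ENNReal

lemma ENNReal.two_mul_le_add_sq (a b : ℝ≥0∞) : 2 * a * b ≤ a ^ 2 + b ^ 2 := by
  rcases eq_top_or_lt_top a with rfl | ha
  · simp [top_pow]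
  rcases eq_top_or_lt_top b with rfl | hb
  · simp [top_pow]
  lift a to NNReal using ha.ne
  lift b to NNReal using hb.ne
  exact_mod_cast _root_.two_mul_le_add_sq a b

theorem lintegral_prod_mul_mul_le_of_symm {α : Type*} [MeasurableSpace α] {μ : Measure α}
    [SFinite μ] {K : α → α → ℝ≥0∞} (hK : Measurable (Function.uncurry K))
    (hK_symm : ∀ x y, K x y = K y x) {M : ℝ≥0∞} (hM : ∀ x, ∫⁻ y, K x y ∂μ ≤ M)
    {f : α → ℝ≥0∞} (hf : AEMeasurable f μ) :
    ∫⁻ p, f p.1 * f p.2 * K p.1 p.2 ∂μ.prod μ ≤ M * ∫⁻ x, f x ^ 2 ∂μ := by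
  have hsq : AEMeasurable (fun p : α × α => f p.1 ^ 2 * K p.1 p.2) (μ.prod μ) :=
    (hf.comp_fst.pow_const 2).mul hK.aemeasurable
  have hswap : ∫⁻ p, f p.2 ^ 2 * K p.1 p.2 ∂μ.prod μ
      = ∫⁻ p, f p.1 ^ 2 * K p.1 p.2 ∂μ.prod μ := by
    rw [← lintegral_prod_swap]
    simp only [Prod.fst_swap, Prod.snd_swap, hK_symm]
  have hdiag : ∫⁻ p, f p.1 ^ 2 * K p.1 p.2 ∂μ.prod μ ≤ M * ∫⁻ x, f x ^ 2 ∂μ := calc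
    _ = ∫⁻ x, f x ^ 2 * ∫⁻ y, K x y ∂μ ∂μ := by
      rw [lintegral_prod _ hsq]
      exact lintegral_congr fun x => by dsimp only; exact lintegral_const_mul _ hK.of_uncurry_left
    _ ≤ ∫⁻ x, f x ^ 2 * M ∂μ := by gcongr with x; exact hM x
    _ = M * ∫⁻ x, f x ^ 2 ∂μ := by rw [lintegral_mul_const'' _ (hf.pow_const 2), mul_comm]
  refine (ENNReal.mul_le_mul_iff_right two_ne_zero ofNat_ne_top).1 ?_
  calc 2 * ∫⁻ p, f p.1 * f p.2 * K p.1 p.2 ∂μ.prod μ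
      = ∫⁻ p, 2 * f p.1 * f p.2 * K p.1 p.2 ∂μ.prod μ := by
        rw [← lintegral_const_mul' _ _ ofNat_ne_top]; simp only [mul_assoc]
    _ ≤ ∫⁻ p, (f p.1 ^ 2 + f p.2 ^ 2) * K p.1 p.2 ∂μ.prod μ := by
        gcongr with p; exact ENNReal.two_mul_le_add_sq _ _
    _ = 2 * ∫⁻ p, f p.1 ^ 2 * K p.1 p.2 ∂μ.prod μ := by
        simp only [add_mul]; rw [lintegral_add_left' hsq, hswap, two_mul]
    _ ≤ 2 * (M * ∫⁻ x, f x ^ 2 ∂μ) := by gcongr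

lemma lintegral_Ici_rpow_neg {a P : ℝ} (ha : 0 < a) (hP : 1 < P) :
    ∫⁻ t in Ici a, ENNReal.ofReal (t ^ (-P)) = ENNReal.ofReal (a ^ (1 - P) / (P - 1)) := by
  rw [← Measure.restrict_congr_set Ioi_ae_eq_Ici, ← ofReal_integral_eq_lintegral_ofReal
      (integrableOn_Ioi_rpow_of_lt (by linarith) ha)
      (ae_restrict_of_forall_mem measurableSet_Ioi fun t ht => Real.rpow_nonneg (ha.trans ht).le _),
    integral_Ioi_rpow_of_lt (by linarith) ha]
  congr 1
  rw [show -P + 1 = -(P - 1) by ring, div_neg, neg_div, neg_neg, neg_sub]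

lemma lintegral_setOf_le_abs_rpow_neg {a P : ℝ} (ha : 0 < a) (hP : 1 < P) :
    ∫⁻ t in {t : ℝ | a ≤ |t|}, ENNReal.ofReal (|t| ^ (-P))
      = ENNReal.ofReal (2 * (a ^ (1 - P) / (P - 1))) := by
  have hsplit : {t : ℝ | a ≤ |t|} = Iic (-a) ∪ Ici a := by
    ext t; simp only [mem_ofPred_eq, mem_union, mem_Iic, mem_Ici, le_abs', or_comm]
  have hneg : ∫⁻ t in Iic (-a), ENNReal.ofReal (|t| ^ (-P))
      = ∫⁻ t in Ici a, ENNReal.ofReal (|t| ^ (-P)) := by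
    rw [← (Measure.measurePreserving_neg volume).setLIntegral_comp_preimage_emb
      (Homeomorph.neg ℝ).measurableEmbedding]
    simp only [neg_preimage, neg_Iic, neg_neg, abs_neg]
  have hpos : ∫⁻ t in Ici a, ENNReal.ofReal (|t| ^ (-P))
      = ∫⁻ t in Ici a, ENNReal.ofReal (t ^ (-P)) :=
    setLIntegral_congr_fun measurableSet_Ici fun t ht => by rw [abs_of_pos (ha.trans_le ht)]
  have hnonneg : 0 ≤ a ^ (1 - P) / (P - 1) := div_nonneg (Real.rpow_nonneg ha.le _) (by linarith)
  rw [hsplit, lintegral_union measurableSet_Ici (Iic_disjoint_Ici.2 (by linarith)), hneg, hpos,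
    lintegral_Ici_rpow_neg ha hP, two_mul, ENNReal.ofReal_add hnonneg hnonneg]

theorem setLIntegral_enorm_mul_enorm_mul_abs_sub_rpow_le {E : Type*} [NormedAddCommGroup E]
    {a P : ℝ} (ha : 0 < a) (hP : 1 < P) {g : ℝ → E} (hg : AEStronglyMeasurable g) :
    ∫⁻ p in {p : ℝ × ℝ | a ≤ |p.1 - p.2|},
        ‖g p.1‖ₑ * ‖g p.2‖ₑ * ENNReal.ofReal (|p.1 - p.2| ^ (-P))
      ≤ ENNReal.ofReal (2 * (a ^ (1 - P) / (P - 1))) * ∫⁻ x, ‖g x‖ₑ ^ 2 := by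
  set k : ℝ → ℝ≥0∞ := {t | a ≤ |t|}.indicator fun t => ENNReal.ofReal (|t| ^ (-P))
  have hk_set : MeasurableSet {t : ℝ | a ≤ |t|} :=
    measurableSet_le measurable_const measurable_abs
  have hk : Measurable k :=
    (by fun_prop : Measurable fun t : ℝ => ENNReal.ofReal (|t| ^ (-P))).indicator hk_set
  have hset : MeasurableSet {p : ℝ × ℝ | a ≤ |p.1 - p.2|} :=
    measurableSet_le measurable_const (by fun_prop)
  calc _ ≤ ∫⁻ p, ‖g p.1‖ₑ * ‖g p.2‖ₑ * k (p.1 - p.2) ∂volume.prod volume := by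
        refine (setLIntegral_mono' hset fun p hp => le_of_eq ?_).trans
          (setLIntegral_le_lintegral _ _)
        rw [show k (p.1 - p.2) = _ from indicator_of_mem (s := {t : ℝ | a ≤ |t|}) hp _]
    _ ≤ _ := lintegral_prod_mul_mul_le_of_symm (K := fun x y => k (x - y))
        (hk.comp measurable_sub)
        (fun x y => by simp only [k, indicator, mem_ofPred_eq, abs_sub_comm])
        (fun x => (lintegral_sub_left_eq_self k x).trans_le
          (by rw [lintegral_indicator hk_set, lintegral_setOf_le_abs_rpow_neg ha hP]))
        hg.enorm

theorem stmt_9 (c α : ℝ) (hc : 0 < c) (hα : 0 < α) (hα4 : α ≤ 1/4) :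
    ∃ C > 0, ∀ lam : ℝ, 2 ≤ lam → ∀ (g : ℝ → ℂ) (x₀ r : ℝ),
      Function.support g ⊆ Metric.ball x₀ r →
      MemLp g 2 volume →
      (∫ p in {p : ℝ × ℝ | c * lam ^ (-(2*α)) ≤ |p.1 - p.2| ∧
            |p.1 - p.2| < lam ^ (-(α/(1-α)))},
          ‖g p.1‖ * ‖g p.2‖ * |p.1 - p.2| ^ (-(1/(2*α))))
        ≤ C * lam ^ (1 - 2*α) * ∫ x, ‖g x‖^2 := by
  set P : ℝ := 1 / (2 * α) with hP_def
  have hP : 1 < P := by rw [hP_def, lt_div_iff₀ (by linarith)]; linarith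
  have hP1 : 0 < P - 1 := by linarith
  refine ⟨2 * (c ^ (1 - P) / (P - 1)), by positivity, fun lam hlam g x₀ r _ hg => ?_⟩
  have hlam : 0 < lam := by linarith
  set a := c * lam ^ (-(2 * α))
  have ha : 0 < a := by positivity
  have hM : 2 * (a ^ (1 - P) / (P - 1)) = 2 * (c ^ (1 - P) / (P - 1)) * lam ^ (1 - 2 * α) := by
    have : -(2 * α) * (1 - P) = 1 - 2 * α := by rw [hP_def]; field_simp; ring
    rw [Real.mul_rpow hc.le (by positivity), ← Real.rpow_mul hlam.le, this]; ring
  have hL2 : ∫⁻ x, ‖g x‖ₑ ^ 2 = ENNReal.ofReal (∫ x, ‖g x‖ ^ 2) := by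
    rw [ofReal_integral_eq_lintegral_ofReal (hg.integrable_norm_pow two_ne_zero)
      (ae_of_all _ fun x => by positivity)]
    simp only [ENNReal.ofReal_pow (norm_nonneg _), ofReal_norm]
  have hF (p : ℝ × ℝ) : ENNReal.ofReal ‖‖g p.1‖ * ‖g p.2‖ * |p.1 - p.2| ^ (-P)‖
      = ‖g p.1‖ₑ * ‖g p.2‖ₑ * ENNReal.ofReal (|p.1 - p.2| ^ (-P)) := by
    rw [Real.norm_of_nonneg (by positivity), ENNReal.ofReal_mul (by positivity),
      ENNReal.ofReal_mul (by positivity), ofReal_norm, ofReal_norm]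
  set S := {p : ℝ × ℝ | a ≤ |p.1 - p.2| ∧ |p.1 - p.2| < lam ^ (-(α / (1 - α)))}
  calc _ ≤ ‖∫ p in S, ‖g p.1‖ * ‖g p.2‖ * |p.1 - p.2| ^ (-P)‖ := Real.le_norm_self _
    _ ≤ _ := norm_integral_le_lintegral_norm _
    _ ≤ (ENNReal.ofReal (2 * (a ^ (1 - P) / (P - 1)))
          * ENNReal.ofReal (∫ x, ‖g x‖ ^ 2)).toReal := by
      refine toReal_mono (by finiteness) ?_
      simp only [hF, ← hL2]
      exact (lintegral_mono_set fun p (hp : p ∈ S) => hp.1).trans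
        (setLIntegral_enorm_mul_enorm_mul_abs_sub_rpow_le ha hP hg.1)
    _ = _ := by rw [← ENNReal.ofReal_mul (by positivity), toReal_ofReal (by positivity), hM]
end

section
/- Suppose that for γ(x,t) = x + t^α (with α ∈ [1/2,1)) and some p ≥ 1 and all f ∈ H^s(ℝ), ‖sup_{t∈(0,1)} |e^{itΔ}f(γ(x,t))|‖_{L^p(B(0,1))} ≤ C ‖f‖_{H^s(ℝ)}. If this holds for every s > 1/4, then p ≤ 4. -/
/-!
Test the estimate on `f̂ = 𝟙_{[0, R]}`. At the time `t₀ = 1/(200 R²)` the phase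
`(x + t₀^α) ξ + t₀ ξ²` stays below `π/3` on `[0, R]` for every `x` within `1/(100 R)` of `-t₀^α`,
so there the maximal function is at least `R/2` (no cancellation); since `α ≥ 1/2` this interval
lies in `B(0, 1)`. The left side is therefore `≳ R^{1 - 1/p}`, while the `H^s` norm is
`≲ R^{s + 1/2}`. Letting `R → ∞` gives `1/2 - 1/p ≤ s` for every `s > 1/4`, hence `p ≤ 4`.
-/
open MeasureTheory Real Set Complex Filter Topology
open scoped ENNReal

noncomputable section

/-- `e^{itΔ} f (x)` on the Fourier side, with `g = f̂` and the normalising constants dropped. -/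
def schrodingerEvol (g : ℝ → ℂ) (x t : ℝ) : ℂ :=
  ∫ ξ, Complex.exp (Complex.I * ((x * ξ + t * ξ ^ 2 : ℝ) : ℂ)) * g ξ

def curveMaximal (g : ℝ → ℂ) (α x : ℝ) : ℝ :=
  ⨆ t : Ioo (0:ℝ) 1, ‖schrodingerEvol g (x + (t:ℝ) ^ α) t‖

def bandIndicator (R : ℝ) : ℝ → ℂ := (Icc 0 R).indicator 1

instance : Nonempty (Ioo (0:ℝ) 1) := nonempty_Ioo_subtype one_pos

section Evolution

variable {g : ℝ → ℂ}

lemma norm_schrodingerEvol_le (x t : ℝ) : ‖schrodingerEvol g x t‖ ≤ ∫ ξ, ‖g ξ‖ :=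
  (norm_integral_le_integral_norm _).trans_eq <| by
    simp only [norm_mul, norm_exp_I_mul_ofReal, one_mul]

lemma continuous_schrodingerEvol (hg : Integrable g) (t : ℝ) :
    Continuous fun x => schrodingerEvol g x t :=
  continuous_of_dominated
    (fun _ => (by fun_prop : Continuous _).aestronglyMeasurable.mul hg.aestronglyMeasurable)
    (fun _ => ae_of_all _ fun _ => by rw [norm_mul, norm_exp_I_mul_ofReal, one_mul])
    hg.norm (ae_of_all _ fun _ => by fun_prop)

lemma bddAbove_range_norm_schrodingerEvol (α x : ℝ) :
    BddAbove (range fun t : Ioo (0:ℝ) 1 => ‖schrodingerEvol g (x + (t:ℝ) ^ α) t‖) :=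
  ⟨_, forall_mem_range.2 fun _ => norm_schrodingerEvol_le _ _⟩

lemma curveMaximal_nonneg (α x : ℝ) : 0 ≤ curveMaximal g α x :=
  Real.iSup_nonneg fun _ => norm_nonneg _

lemma curveMaximal_le (α x : ℝ) : curveMaximal g α x ≤ ∫ ξ, ‖g ξ‖ :=
  ciSup_le fun _ => norm_schrodingerEvol_le _ _

lemma norm_schrodingerEvol_le_curveMaximal (α x : ℝ) (t : Ioo (0:ℝ) 1) :
    ‖schrodingerEvol g (x + (t:ℝ) ^ α) t‖ ≤ curveMaximal g α x :=
  le_ciSup (bddAbove_range_norm_schrodingerEvol α x) t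

lemma measurable_curveMaximal (hg : Integrable g) (α : ℝ) :
    Measurable (curveMaximal g α) :=
  (lowerSemicontinuous_ciSup (bddAbove_range_norm_schrodingerEvol α) fun t =>
    ((continuous_schrodingerEvol hg t).comp
      (continuous_add_const _)).norm.lowerSemicontinuous).measurable

lemma integrableOn_curveMaximal_rpow (hg : Integrable g) (α : ℝ) {p : ℝ}
    (hp : 0 ≤ p) {s : Set ℝ} (hs : volume s ≠ ∞) :
    IntegrableOn (fun x => curveMaximal g α x ^ p) s :=
  Measure.integrableOn_of_bounded hs
    ((measurable_curveMaximal hg α).pow_const p).aestronglyMeasurable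
    (ae_of_all _ fun x => by
      rw [norm_of_nonneg (rpow_nonneg (curveMaximal_nonneg α x) p)]
      exact rpow_le_rpow (curveMaximal_nonneg α x) (curveMaximal_le α x) hp)

end Evolution

lemma measureReal_div_two_le_re_setIntegral_exp {X : Type*} [MeasurableSpace X] {μ : Measure X}
    {s : Set X} {φ : X → ℝ} (hφ : Measurable φ) (hs : MeasurableSet s) (hμs : μ s ≠ ∞)
    (hφs : ∀ x ∈ s, |φ x| ≤ π / 3) :
    μ.real s / 2 ≤ (∫ x in s, Complex.exp (Complex.I * (φ x : ℂ)) ∂μ).re := by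
  have hint : IntegrableOn (fun x => Complex.exp (Complex.I * (φ x : ℂ))) s μ :=
    Measure.integrableOn_of_bounded hμs (by fun_prop) (M := 1)
      (ae_of_all _ fun x => (norm_exp_I_mul_ofReal _).le)
  have hcos : ∀ x ∈ s, 1 / 2 ≤ (Complex.exp (Complex.I * (φ x : ℂ))).re := fun x hx => by
    rw [mul_comm, exp_ofReal_mul_I_re, ← Real.cos_abs, ← cos_pi_div_three]
    exact cos_le_cos_of_nonneg_of_le_pi (abs_nonneg _) (by linarith [pi_pos]) (hφs x hx)
  have := setIntegral_ge_of_const_le hs hμs hcos hint.re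
  have hre : ∫ x in s, (Complex.exp (Complex.I * (φ x : ℂ))).re ∂μ = _ := integral_re hint
  rw [smul_eq_mul, hre] at this
  exact (div_eq_mul_one_div _ _).trans_le this

lemma exponent_le_of_forall_mul_rpow_le {a b k K : ℝ} (hk : 0 < k)
    (h : ∀ R : ℝ, 1 ≤ R → k * R ^ b ≤ K * R ^ a) : b ≤ a := by
  by_contra! hab
  obtain ⟨R, hRlarge, hR⟩ := (((tendsto_rpow_atTop (sub_pos.2 hab)).eventually_gt_atTop (K / k)).and
    (eventually_ge_atTop 1)).exists
  have hR0 : 0 < R := by linarith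
  have := h R hR
  rw [rpow_sub hR0, div_lt_div_iff₀ hk (rpow_pos_of_pos hR0 a)] at hRlarge
  linarith

section Band

variable {R : ℝ}

lemma integrable_bandIndicator (R : ℝ) : Integrable (bandIndicator R) :=
  (integrable_indicator_iff measurableSet_Icc).2 (integrableOn_const (by simp))

lemma schrodingerEvol_bandIndicator (R x t : ℝ) :
    schrodingerEvol (bandIndicator R) x t =
      ∫ ξ in Icc 0 R, Complex.exp (Complex.I * ((x * ξ + t * ξ ^ 2 : ℝ) : ℂ)) := by
  rw [schrodingerEvol, ← integral_indicator measurableSet_Icc]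
  congr 1; ext ξ
  by_cases hξ : ξ ∈ Icc 0 R <;> simp [bandIndicator, hξ]

lemma abs_mul_add_mul_sq_le (a : ℝ) {t ξ : ℝ} (ht : 0 ≤ t) (hξ : ξ ∈ Icc 0 R) :
    |a * ξ + t * ξ ^ 2| ≤ |a| * R + t * R ^ 2 := by
  calc |a * ξ + t * ξ ^ 2| ≤ |a * ξ| + |t * ξ ^ 2| := abs_add_le _ _
    _ = |a| * ξ + t * ξ ^ 2 := by
        rw [abs_mul, abs_of_nonneg hξ.1, abs_of_nonneg (mul_nonneg ht (sq_nonneg ξ))]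
    _ ≤ |a| * R + t * R ^ 2 := by obtain ⟨hξ0, hξR⟩ := hξ; gcongr

lemma half_le_re_schrodingerEvol_bandIndicator (hR : 0 ≤ R) {a t : ℝ} (ha : |a| * R ≤ 1 / 100)
    (ht : 0 ≤ t) (htR : t * R ^ 2 ≤ 1 / 200) :
    R / 2 ≤ (schrodingerEvol (bandIndicator R) a t).re := by
  have hphase : ∀ ξ ∈ Icc 0 R, |a * ξ + t * ξ ^ 2| ≤ π / 3 := fun ξ hξ => by
    linarith [abs_mul_add_mul_sq_le a ht hξ, pi_gt_three]
  have := measureReal_div_two_le_re_setIntegral_exp (μ := volume) (by fun_prop) measurableSet_Icc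
    (by simp) hphase
  rwa [Real.volume_real_Icc_of_le hR, sub_zero, ← schrodingerEvol_bandIndicator] at this

lemma integral_sobolevWeight_bandIndicator_le {s : ℝ} (hs : 0 ≤ s) (hR : 1 ≤ R) :
    ∫ ξ, (1 + ξ ^ 2) ^ s * ‖bandIndicator R ξ‖ ^ 2 ≤ (2 * R ^ 2) ^ s * R := by
  have hbound : (fun ξ => (1 + ξ ^ 2) ^ s * ‖bandIndicator R ξ‖ ^ 2) ≤
      (Icc 0 R).indicator fun _ => (2 * R ^ 2) ^ s := fun ξ => by
    by_cases hξ : ξ ∈ Icc 0 R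
    · simp only [bandIndicator, indicator_of_mem hξ, Pi.one_apply, norm_one, one_pow, mul_one]
      exact rpow_le_rpow (by positivity) (by nlinarith [hξ.1, hξ.2]) hs
    · simp [bandIndicator, hξ]
  calc _ ≤ ∫ ξ, (Icc 0 R).indicator (fun _ => (2 * R ^ 2) ^ s) ξ :=
        integral_mono_of_nonneg (ae_of_all _ fun ξ => by positivity)
          ((integrable_indicator_iff measurableSet_Icc).2 (integrableOn_const (by simp)))
          (ae_of_all _ hbound)
    _ = (2 * R ^ 2) ^ s * R := by
        rw [integral_indicator_const _ measurableSet_Icc, Real.volume_real_Icc_of_le (by linarith),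
          smul_eq_mul, sub_zero, mul_comm]

end Band

lemma half_le_curveMaximal_bandIndicator {α R x : ℝ} (hR : 1 ≤ R)
    (hx : |x + (1 / (200 * R ^ 2)) ^ α| * R ≤ 1 / 100) :
    R / 2 ≤ curveMaximal (bandIndicator R) α x := by
  set t₀ := 1 / (200 * R ^ 2) with ht₀_def
  have ht₀ : t₀ ∈ Ioo (0:ℝ) 1 := ⟨by positivity, by rw [div_lt_one (by positivity)]; nlinarith⟩
  calc R / 2 ≤ (schrodingerEvol (bandIndicator R) (x + t₀ ^ α) t₀).re :=
        half_le_re_schrodingerEvol_bandIndicator (by linarith) hx ht₀.1.le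
          (by rw [ht₀_def]; field_simp; norm_num)
    _ ≤ ‖schrodingerEvol (bandIndicator R) (x + t₀ ^ α) t₀‖ := re_le_norm _
    _ ≤ curveMaximal (bandIndicator R) α x :=
        norm_schrodingerEvol_le_curveMaximal α x ⟨t₀, ht₀⟩

lemma rpow_le_sqrt_of_le_one {t α : ℝ} (ht : 0 < t) (ht1 : t ≤ 1) (hα : 1 / 2 ≤ α) :
    t ^ α ≤ √t := by
  rw [sqrt_eq_rpow]; exact rpow_le_rpow_of_exponent_ge ht ht1 hα

lemma integral_curveMaximal_bandIndicator_ge {α p R : ℝ} (hα : 1 / 2 ≤ α) (hp : 0 < p)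
    (hR : 1 ≤ R) :
    (R / 2) ^ p * (1 / (50 * R)) ≤
      ∫ x in Metric.ball 0 1, curveMaximal (bandIndicator R) α x ^ p := by
  set c := (1 / (200 * R ^ 2)) ^ α
  set δ := 1 / (100 * R) with hδ_def
  have hc : c ≤ 1 / 2 := by
    refine (rpow_le_sqrt_of_le_one (by positivity) ?_ hα).trans ?_
    · rw [div_le_one (by positivity)]; nlinarith
    · rw [sqrt_le_left (by norm_num), div_le_iff₀ (by positivity)]; nlinarith
  have hδ : δ ≤ 1 / 100 := by rw [hδ_def, div_le_div_iff₀ (by positivity) (by norm_num)]; linarith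
  have hδR : δ * R = 1 / 100 := by rw [hδ_def]; field_simp
  have hS : Icc (-c - δ) (-c + δ) ⊆ Metric.ball 0 1 := fun x hx => by
    have : 0 ≤ c := by positivity
    rw [Metric.mem_ball, dist_zero_right, norm_eq_abs, abs_lt]
    constructor <;> linarith [hx.1, hx.2]
  have hlow : ∀ x ∈ Icc (-c - δ) (-c + δ), (R / 2) ^ p ≤ curveMaximal (bandIndicator R) α x ^ p :=
    fun x hx => rpow_le_rpow (by positivity) (half_le_curveMaximal_bandIndicator hR (by
      rw [← hδR]
      exact mul_le_mul_of_nonneg_right (abs_le.2 ⟨by linarith [hx.1], by linarith [hx.2]⟩)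
        (by linarith))) hp.le
  calc (R / 2) ^ p * (1 / (50 * R)) = volume.real (Icc (-c - δ) (-c + δ)) • (R / 2) ^ p := by
        have : 0 < δ := by rw [hδ_def]; positivity
        rw [Real.volume_real_Icc_of_le (by linarith), smul_eq_mul, hδ_def]; field_simp; ring
    _ ≤ ∫ x in Icc (-c - δ) (-c + δ), curveMaximal (bandIndicator R) α x ^ p :=
        setIntegral_ge_of_const_le measurableSet_Icc (by simp) hlow
          (integrableOn_curveMaximal_rpow (integrable_bandIndicator R) α hp.le (by simp))
    _ ≤ ∫ x in Metric.ball 0 1, curveMaximal (bandIndicator R) α x ^ p :=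
        setIntegral_mono_set
          (integrableOn_curveMaximal_rpow (integrable_bandIndicator R) α hp.le
            measure_ball_lt_top.ne)
          (ae_of_all _ fun x => rpow_nonneg (curveMaximal_nonneg α x) p) hS.eventuallyLE

lemma mul_rpow_le_of_maximal_estimate {α p s C : ℝ} (hα : 1 / 2 ≤ α) (hp : 0 < p) (hs : 0 ≤ s)
    (hC : 0 ≤ C)
    (hest : ∀ g : ℝ → ℂ, Integrable g →
      (∫ x in Metric.ball (0:ℝ) 1, curveMaximal g α x ^ p) ^ (1 / p) ≤
        C * (∫ ξ, (1 + ξ ^ 2) ^ s * ‖g ξ‖ ^ 2) ^ ((1:ℝ) / 2))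
    {R : ℝ} (hR : 1 ≤ R) :
    1 / 2 * (1 / 50) ^ (1 / p) * R ^ (1 - 1 / p) ≤ C * 2 ^ (s / 2) * R ^ (s + 1 / 2) := by
  have hR0 : 0 < R := by linarith
  calc 1 / 2 * (1 / 50) ^ (1 / p) * R ^ (1 - 1 / p)
      = ((R / 2) ^ p * (1 / (50 * R))) ^ (1 / p) := by
        rw [mul_rpow (by positivity) (by positivity), one_div p,
          rpow_rpow_inv (by positivity) hp.ne',
          show 1 / (50 * R) = 1 / 50 * R⁻¹ by ring, mul_rpow (by norm_num) (by positivity),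
          inv_rpow hR0.le, ← rpow_neg hR0.le, sub_eq_add_neg, rpow_add hR0, rpow_one]
        ring
    _ ≤ (∫ x in Metric.ball (0:ℝ) 1, curveMaximal (bandIndicator R) α x ^ p) ^ (1 / p) :=
        rpow_le_rpow (by positivity) (integral_curveMaximal_bandIndicator_ge hα hp hR)
          (by positivity)
    _ ≤ C * (∫ ξ, (1 + ξ ^ 2) ^ s * ‖bandIndicator R ξ‖ ^ 2) ^ ((1:ℝ) / 2) :=
        hest _ (integrable_bandIndicator R)
    _ ≤ C * ((2 * R ^ 2) ^ s * R) ^ ((1:ℝ) / 2) := by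
        gcongr
        exact integral_sobolevWeight_bandIndicator_le hs hR
    _ = C * 2 ^ (s / 2) * R ^ (s + 1 / 2) := by
        rw [mul_rpow (by positivity) hR0.le, ← rpow_mul (by positivity),
          mul_rpow (by norm_num) (by positivity), ← rpow_natCast, ← rpow_mul hR0.le,
          rpow_add hR0]
        ring_nf

end

theorem stmt_13 (α p : ℝ) (hα : α ∈ Set.Ico (1/2 : ℝ) 1) (hp : 1 ≤ p)
    (hmax : ∀ s : ℝ, 1/4 < s → ∃ C > 0, ∀ g : ℝ → ℂ, Integrable g →
      (∫ x in Metric.ball (0:ℝ) 1,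
          (⨆ t : Set.Ioo (0:ℝ) 1,
            ‖∫ ξ, Complex.exp (Complex.I *
              (((x + (t:ℝ) ^ α) * ξ + (t:ℝ) * ξ ^ 2 : ℝ) : ℂ)) * g ξ‖) ^ p) ^ (1/p)
        ≤ C * (∫ ξ, (1 + ξ^2) ^ s * ‖g ξ‖^2) ^ ((1:ℝ)/2)) :
    p ≤ 4 := by
  have hp0 : 0 < p := by linarith
  have hexponent : ∀ s, 1 / 4 < s → 1 / 2 - 1 / p ≤ s := fun s hs => by
    obtain ⟨C, hC, hest⟩ := hmax s hs
    have := exponent_le_of_forall_mul_rpow_le (by positivity) fun R hR =>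
      mul_rpow_le_of_maximal_estimate hα.1 hp0 (by linarith) hC.le hest hR
    linarith
  have : 1 / 4 ≤ 1 / p := by linarith [le_of_forall_gt_imp_ge_of_dense hexponent]
  rwa [one_div_le_one_div (by norm_num) hp0] at this
end
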